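/- arXiv:2506.21309 — 4 statements merged into one kernel-verified Lean document; each statement's English description precedes it below -/
import Mathlib

section
/- Let q ≥ 2 be an integer, let 1 ≤ t ≤ q and 1 ≤ t' ≤ q, and let 1 ≤ α₁ ≤ ... ≤ α_t and 1 ≤ β₁ ≤ ... ≤ β_{t'} be integers such that Σᵢ(q^{αᵢ} − 1) = Σᵢ(q^{βᵢ} − 1). Then t = t' and αᵢ = βᵢ for all i. -/
/-!
Every exponent is positive, so `q` divides `∑ qᵅⁱ` and `∑ qᵝⁱ`, and the hypothesis gives
`t ≡ t' (mod q)`, hence `t = t'` as both lie in `[1, q]`. It remains to see that `∑ qᵅⁱ`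
determines a sorted tuple of at most `q` exponents. Its largest entry is determined: if `αₜ < βₜ`
then `∑ qᵅⁱ ≤ t q^αₜ < q^(αₜ+1) + (t - 1) ≤ q^βₜ + (t - 1) ≤ ∑ qᵝⁱ`. Remove it and induct on `t`.
-/

open Finset

theorem Nat.ModEq.eq_of_pos_of_le {m a b : ℕ} (h : a ≡ b [MOD m]) (ha : 0 < a) (ha' : a ≤ m)
    (hb : 0 < b) (hb' : b ≤ m) : a = b := by
  have h' : a - 1 ≡ b - 1 [MOD m] :=
    Nat.ModEq.add_right_cancel' 1 (by rwa [Nat.sub_add_cancel ha, Nat.sub_add_cancel hb])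
  have := h'.eq_of_lt_of_lt (by omega) (by omega)
  omega

section PowSum

variable {q : ℕ}

theorem sum_pow_sub_one_add_card {ι : Type*} [Fintype ι] (hq : 0 < q) (a : ι → ℕ) :
    ∑ i, (q ^ a i - 1) + Fintype.card ι = ∑ i, q ^ a i := by
  rw [← card_univ, card_eq_sum_ones, ← sum_add_distrib]
  exact sum_congr rfl fun i _ ↦ Nat.sub_add_cancel (Nat.one_le_pow _ _ hq)

theorem sum_pow_modEq_zero {ι : Type*} [Fintype ι] {a : ι → ℕ} (ha : ∀ i, 1 ≤ a i) :
    ∑ i, q ^ a i ≡ 0 [MOD q] :=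
  Nat.modEq_zero_iff_dvd.mpr <| dvd_sum fun i _ ↦ dvd_pow_self q (by have := ha i; omega)

theorem card_eq_of_sum_pow_sub_one_eq (hq : 0 < q) {t t' : ℕ} (ht : 0 < t) (ht' : t ≤ q)
    (ht1 : 0 < t') (ht1' : t' ≤ q) {a : Fin t → ℕ} {b : Fin t' → ℕ}
    (ha : ∀ i, 1 ≤ a i) (hb : ∀ i, 1 ≤ b i)
    (hsum : ∑ i, (q ^ a i - 1) = ∑ i, (q ^ b i - 1)) : t = t' := by
  have hA := sum_pow_sub_one_add_card hq a
  have hB := sum_pow_sub_one_add_card hq b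
  rw [Fintype.card_fin] at hA hB
  have hmod : ∑ i, (q ^ a i - 1) + t ≡ ∑ i, (q ^ a i - 1) + t' [MOD q] := by
    rw [hA, hsum, hB]
    exact (sum_pow_modEq_zero ha).trans (sum_pow_modEq_zero hb).symm
  exact (Nat.ModEq.add_left_cancel' _ hmod).eq_of_pos_of_le ht ht' ht1 ht1'

theorem le_last_of_sum_pow_eq (hq : 2 ≤ q) {t : ℕ} (ht : t + 1 ≤ q) {a b : Fin (t + 1) → ℕ}
    (ha : Monotone a) (hsum : ∑ i, q ^ a i = ∑ i, q ^ b i) :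
    b (Fin.last t) ≤ a (Fin.last t) := by
  by_contra! hlt
  set m := a (Fin.last t)
  have hA : ∑ i, q ^ a i ≤ (t + 1) * q ^ m := by
    simpa using sum_le_card_nsmul univ (fun i ↦ q ^ a i) (q ^ m)
      fun i _ ↦ Nat.pow_le_pow_right (by omega) (ha (Fin.le_last i))
  have hB : q ^ b (Fin.last t) + t ≤ ∑ i, q ^ b i := by
    have hinit : t ≤ ∑ i : Fin t, q ^ b i.castSucc := by
      simpa using card_nsmul_le_sum univ (fun i : Fin t ↦ q ^ b i.castSucc) 1
        fun i _ ↦ Nat.one_le_pow _ _ (by omega)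
    rw [Fin.sum_univ_castSucc]
    omega
  have hgap : q ^ (m + 1) ≤ q ^ b (Fin.last t) := Nat.pow_le_pow_right (by omega) hlt
  have hstrict : (t + 1) * q ^ m < q ^ (m + 1) + t := by
    have := Nat.one_le_pow m q (by omega)
    rw [pow_succ]
    nlinarith
  omega

theorem eq_of_sum_pow_eq (hq : 2 ≤ q) {t : ℕ} (ht : t ≤ q) {a b : Fin t → ℕ}
    (ha : Monotone a) (hb : Monotone b) (hsum : ∑ i, q ^ a i = ∑ i, q ^ b i) : a = b := by
  induction t with
  | zero => exact Subsingleton.elim a b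
  | succ t ih =>
    have hlast : a (Fin.last t) = b (Fin.last t) :=
      le_antisymm (le_last_of_sum_pow_eq hq ht hb hsum.symm) (le_last_of_sum_pow_eq hq ht ha hsum)
    have hinit : Fin.init a = Fin.init b := by
      refine ih (by omega) (ha.comp Fin.strictMono_castSucc.monotone)
        (hb.comp Fin.strictMono_castSucc.monotone) ?_
      rw [Fin.sum_univ_castSucc, Fin.sum_univ_castSucc, hlast] at hsum
      exact Nat.add_right_cancel hsum
    rw [← Fin.snoc_init_self a, ← Fin.snoc_init_self b, hinit, hlast]

end PowSum

/-- If `q ≥ 2`, `1 ≤ t, t' ≤ q`, and nondecreasing tuples of positive integers `α`, `β`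
satisfy `Σ (q^αᵢ - 1) = Σ (q^βᵢ - 1)`, then the tuples coincide. -/
theorem eigencount_sum_injective (q t t' : ℕ) (hq : 2 ≤ q)
    (ht : 1 ≤ t) (ht' : t ≤ q) (ht1 : 1 ≤ t') (ht1' : t' ≤ q)
    (α : Fin t → ℕ) (β : Fin t' → ℕ)
    (hα1 : ∀ i, 1 ≤ α i) (hβ1 : ∀ i, 1 ≤ β i)
    (hαmono : Monotone α) (hβmono : Monotone β)
    (hsum : ∑ i, (q ^ α i - 1) = ∑ i, (q ^ β i - 1)) :
    ∃ h : t = t', ∀ i : Fin t, α i = β (Fin.cast h i) := by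
  have hq0 : 0 < q := by omega
  obtain rfl := card_eq_of_sum_pow_sub_one_eq hq0 ht ht' ht1 ht1' hα1 hβ1 hsum
  have hpow : ∑ i, q ^ α i = ∑ i, q ^ β i := by
    rw [← sum_pow_sub_one_add_card hq0 α, ← sum_pow_sub_one_add_card hq0 β, hsum]
  exact ⟨rfl, congrFun (eq_of_sum_pow_eq hq ht' hαmono hβmono hpow)⟩
end

section
/- If M is a diagonalizable (n+1)×(n+1) matrix over F_q with t > 2 distinct eigenvalues whose eigenspaces have dimensions g₁ ≥ g₂ ≥ … ≥ g_t, then there exists a diagonalizable matrix M' with exactly t−1 distinct eigenvalues whose eigenspace dimensions are g₁+g₂, g₃, …, g_t, and M' has strictly more eigenvectors than M; equivalently, (q^{g₁+g₂} − 1) + Σ_{i≥3}(q^{gᵢ} − 1) > Σ_{i≥1}(q^{gᵢ} − 1). -/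
/-!
The nonzero eigenvectors of a linear map are the disjoint union of its punctured eigenspaces, so
a matrix whose eigenspaces `E_c` exhaust `F^{n+1}` has exactly `∑ (q^{dim E_c} - 1)` of them;
in particular any diagonal matrix with the merged multiplicities `g₁ + g₂, g₃, …, g_t` realises
the new count. Merging gains because `(q^a - 1)(q^b - 1) > 0`, i.e.
`q^{a+b} - 1 > (q^a - 1) + (q^b - 1)` for `a, b ≥ 1`.
-/

open Matrix Module DirectSum
open scoped Function

namespace Module.End

variable {F V : Type*} [Field F] [AddCommGroup V] [Module F V]

theorem sum_finrank_eigenspace_le [Fintype F] [FiniteDimensional F V] (f : End F V) :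
    ∑ c : F, finrank F (f.eigenspace c) ≤ finrank F V := by
  classical
  have h : finrank F (⨁ c, f.eigenspace c) ≤ finrank F V :=
    LinearMap.finrank_le_finrank_of_injective f.eigenspaces_iSupIndep.dfinsupp_lsum_injective
  rwa [Module.finrank_directSum] at h

theorem eigenspace_eq_bot_of_sum_finrank_eq [Fintype F] [FiniteDimensional F V] (f : End F V)
    {ι : Type*} [Fintype ι] {μ : ι → F} (hμ : Function.Injective μ)
    (hsum : ∑ i, finrank F (f.eigenspace (μ i)) = finrank F V) {c : F}
    (hc : c ∉ Set.range μ) : f.eigenspace c = ⊥ := by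
  classical
  have hc' : c ∉ Finset.univ.image μ := by simpa using hc
  have hle : ∑ c' ∈ insert c (Finset.univ.image μ), finrank F (f.eigenspace c') ≤
      finrank F V :=
    (Finset.sum_le_univ_sum_of_nonneg fun _ => Nat.zero_le _).trans f.sum_finrank_eigenspace_le
  rw [Finset.sum_insert hc', Finset.sum_image hμ.injOn, hsum] at hle
  exact Submodule.finrank_eq_zero.1 (by omega)

theorem ncard_eigenvectors [Fintype F] [Finite V] (f : End F V) :
    {v | v ≠ 0 ∧ ∃ c : F, f v = c • v}.ncard =
      ∑ c : F, (Fintype.card F ^ finrank F (f.eigenspace c) - 1) := by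
  have hunion : {v | v ≠ 0 ∧ ∃ c : F, f v = c • v} = ⋃ c, (f.eigenspace c : Set V) \ {0} := by
    ext v
    simp [and_comm]
  have hdisj : Pairwise (Disjoint on fun c : F => (f.eigenspace c : Set V) \ {0}) := by
    intro a b hab
    rw [Function.onFun, Set.disjoint_left]
    rintro v ⟨hva, hv0⟩ ⟨hvb, -⟩
    exact hv0 (Submodule.disjoint_def.1 (f.disjoint_genEigenspace hab 1 1) v hva hvb)
  rw [hunion, Set.ncard_iUnion_of_finite (fun _ => Set.toFinite _) hdisj,
    finsum_eq_sum_of_fintype]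
  refine Finset.sum_congr rfl fun c _ => ?_
  rw [Set.ncard_sdiff_singleton_of_mem (f.eigenspace c).zero_mem, ← Nat.card_coe_set_eq,
    SetLike.coe_sort_coe, Module.natCard_eq_pow_finrank (K := F), Nat.card_eq_fintype_card]

theorem ncard_eigenvectors_eq_sum [Fintype F] [Finite V] (f : End F V)
    {ι : Type*} [Fintype ι] {μ : ι → F} (hμ : Function.Injective μ)
    (hbot : ∀ c ∉ Set.range μ, f.eigenspace c = ⊥) :
    {v | v ≠ 0 ∧ ∃ c : F, f v = c • v}.ncard =
      ∑ i, (Fintype.card F ^ finrank F (f.eigenspace (μ i)) - 1) := by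
  rw [f.ncard_eigenvectors]
  refine (Fintype.sum_of_injective μ hμ _
    (fun c => Fintype.card F ^ finrank F (f.eigenspace c) - 1) (fun c hc => ?_) fun _ => rfl).symm
  rw [hbot c hc, finrank_bot, pow_zero, Nat.sub_self]

end Module.End

theorem exists_card_fiber_eq {ι m : Type*} [Fintype ι] [Fintype m] (h : ι → ℕ)
    (hm : Fintype.card m = ∑ i, h i) : ∃ a : m → ι, ∀ i, Nat.card {j // a j = i} = h i := by
  let e : m ≃ Σ i, Fin (h i) := Fintype.equivOfCardEq (by simp [hm])
  refine ⟨fun j => (e j).1, fun i => ?_⟩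
  rw [Nat.card_congr ((e.subtypeEquiv fun _ => Iff.rfl).trans (Equiv.sigmaSubtype i)),
    Nat.card_eq_fintype_card, Fintype.card_fin]

namespace Matrix

variable {F m : Type*} [Field F] [Fintype m]

theorem ncard_vecMul_eigenvectors_eq_sum [Fintype F] (M : Matrix m m F) {ι : Type*} [Fintype ι]
    {μ : ι → F} (hμ : Function.Injective μ)
    (hbot : ∀ c ∉ Set.range μ, Module.End.eigenspace Mᵀ.mulVecLin c = ⊥) :
    {ξ | ξ ≠ 0 ∧ ∃ c : F, vecMul ξ M = c • ξ}.ncard =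
      ∑ i, (Fintype.card F ^ finrank F (Module.End.eigenspace Mᵀ.mulVecLin (μ i)) - 1) := by
  simpa [mulVec_transpose] using Module.End.ncard_eigenvectors_eq_sum Mᵀ.mulVecLin hμ hbot

variable [DecidableEq m]

theorem finrank_eigenspace_diagonal (w : m → F) (c : F) :
    finrank F (Module.End.eigenspace (diagonal w).mulVecLin c) = Nat.card {j // w j = c} := by
  classical
  have hker : Module.End.eigenspace (diagonal w).mulVecLin c =
      LinearMap.ker (diagonal fun j => w j - c).mulVecLin := by
    rw [Module.End.eigenspace_def]
    congr 1
    refine LinearMap.ext fun v => funext fun j => ?_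
    simp [mulVec_diagonal, sub_mul]
  have hrank := LinearMap.finrank_range_add_finrank_ker (diagonal fun j => w j - c).mulVecLin
  rw [← Matrix.rank, rank_diagonal, ← hker, finrank_fintype_fun_eq_card] at hrank
  simp only [sub_ne_zero, ne_eq] at hrank
  have hcompl := Fintype.card_subtype_compl fun j => w j = c
  have hle := Fintype.card_subtype_le fun j => w j = c
  rw [Nat.card_eq_fintype_card]
  omega

theorem eigenspace_diagonal_eq_bot {w : m → F} {c : F} (hc : c ∉ Set.range w) :
    Module.End.eigenspace (diagonal w).mulVecLin c = ⊥ := by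
  refine Submodule.finrank_eq_zero.1 ?_
  rw [finrank_eigenspace_diagonal, Nat.card_eq_zero]
  exact Or.inl ⟨fun ⟨j, hj⟩ => hc ⟨j, hj⟩⟩

theorem exists_finrank_eigenspace_eq {ι : Type*} [Fintype ι] {μ : ι → F}
    (hμ : Function.Injective μ) (h : ι → ℕ) (hm : Fintype.card m = ∑ i, h i) :
    ∃ M : Matrix m m F, (∀ c ∉ Set.range μ, Module.End.eigenspace Mᵀ.mulVecLin c = ⊥) ∧
      ∀ i, finrank F (Module.End.eigenspace Mᵀ.mulVecLin (μ i)) = h i := by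
  obtain ⟨a, ha⟩ := exists_card_fiber_eq h hm
  refine ⟨diagonal (μ ∘ a), fun c hc => ?_, fun i => ?_⟩
  · rw [diagonal_transpose]
    exact eigenspace_diagonal_eq_bot fun hc' => hc (Set.range_comp_subset_range a μ hc')
  · rw [diagonal_transpose, finrank_eigenspace_diagonal, ← ha]
    simp only [Function.comp_apply, hμ.eq_iff]

end Matrix

theorem pow_sub_one_add_pow_sub_one_lt {q a b : ℕ} (hq : 1 < q) (ha : 1 ≤ a) (hb : 1 ≤ b) :
    q ^ a - 1 + (q ^ b - 1) < q ^ (a + b) - 1 := by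
  have hqa : 2 ≤ q ^ a := hq.trans_le (Nat.le_self_pow (by omega) q)
  have hqb : 2 ≤ q ^ b := hq.trans_le (Nat.le_self_pow (by omega) q)
  have := Nat.add_le_mul hqa hqb
  rw [pow_add]
  omega

theorem Fin.sum_ite_two_le {M : Type*} [AddCommMonoid M] {k : ℕ} (x : Fin (k + 2) → M) :
    ∑ i : Fin (k + 2), (if 2 ≤ (i : ℕ) then x i else 0) = ∑ i : Fin k, x i.succ.succ := by
  simp [Fin.sum_univ_succ]

/-- If `M` is diagonalizable over `F_q` with `t > 2` eigenspaces of dimensions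
`g₁ ≥ g₂ ≥ … ≥ g_t`, then there is a diagonalizable matrix `M'` with `t - 1` eigenspaces
of dimensions `g₁ + g₂, g₃, …, g_t` having strictly more eigenvectors than `M`;
equivalently `(q^{g₁+g₂} - 1) + Σ_{i ≥ 3}(q^{gᵢ} - 1) > Σᵢ (q^{gᵢ} - 1)`. -/
theorem merge_eigenspaces_more_eigenvectors {n : ℕ} {F : Type*} [Field F] [Fintype F]
    (t : ℕ) (ht : 2 < t) (g : Fin t → ℕ) (hg1 : ∀ i, 1 ≤ g i)
    (M : Matrix (Fin (n + 1)) (Fin (n + 1)) F)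
    (lam : Fin t → F) (hinj : Function.Injective lam)
    (hdim : ∀ i, Module.finrank F
      (Module.End.eigenspace (Matrix.mulVecLin Mᵀ) (lam i)) = g i)
    (hdiagonalizable : ∑ i, g i = n + 1) :
    (∃ (M' : Matrix (Fin (n + 1)) (Fin (n + 1)) F) (mu : Fin (t - 1) → F),
      Function.Injective mu ∧
      (∀ lam' : F, lam' ∉ Set.range mu →
        Module.End.eigenspace (Matrix.mulVecLin M'ᵀ) lam' = ⊥) ∧
      (∀ i : Fin (t - 1),
        Module.finrank F (Module.End.eigenspace (Matrix.mulVecLin M'ᵀ) (mu i)) =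
          if (i : ℕ) = 0 then g ⟨0, by omega⟩ + g ⟨1, by omega⟩
          else g ⟨(i : ℕ) + 1, by omega⟩) ∧
      Set.ncard {ξ : Fin (n + 1) → F | ξ ≠ 0 ∧ ∃ c : F, Matrix.vecMul ξ M' = c • ξ} >
        Set.ncard {ξ : Fin (n + 1) → F | ξ ≠ 0 ∧ ∃ c : F, Matrix.vecMul ξ M = c • ξ}) ∧
    ((Fintype.card F) ^ (g ⟨0, by omega⟩ + g ⟨1, by omega⟩) - 1)
        + ∑ i : Fin t, (if 2 ≤ (i : ℕ) then (Fintype.card F) ^ g i - 1 else 0)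
      > ∑ i : Fin t, ((Fintype.card F) ^ g i - 1) := by
  obtain ⟨k, rfl⟩ : ∃ k, t = k + 2 := ⟨t - 2, by omega⟩
  set q := Fintype.card F
  have key : ∑ i, (q ^ g i - 1) < q ^ (g 0 + g 1) - 1 + ∑ i : Fin k, (q ^ g i.succ.succ - 1) := by
    rw [Fin.sum_univ_succ, Fin.sum_univ_succ, ← add_assoc]
    exact Nat.add_lt_add_right
      (pow_sub_one_add_pow_sub_one_lt Fintype.one_lt_card (hg1 0) (hg1 1)) _
  refine ⟨?_, by simpa [Fin.sum_ite_two_le] using key⟩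
  let dims : Fin (k + 1) → ℕ := Fin.cons (g 0 + g 1) fun i => g i.succ.succ
  let mu : Fin (k + 1) → F := Fin.cons (lam 0) fun i => lam i.succ.succ
  have hmu : Function.Injective mu := Fin.cons_injective_iff.2
    ⟨fun ⟨i, hi⟩ => Fin.succ_ne_zero _ (hinj hi),
      hinj.comp ((Fin.succ_injective _).comp (Fin.succ_injective _))⟩
  obtain ⟨M', hbot', hdim'⟩ := exists_finrank_eigenspace_eq (m := Fin (n + 1)) hmu dims
    (by simp [dims, ← hdiagonalizable, Fin.sum_univ_succ, add_assoc])
  have hbot : ∀ c ∉ Set.range lam, Module.End.eigenspace Mᵀ.mulVecLin c = ⊥ := fun _ =>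
    Module.End.eigenspace_eq_bot_of_sum_finrank_eq _ hinj (by simp [hdim, hdiagonalizable])
  refine ⟨M', mu, hmu, hbot', fun i => ?_, ?_⟩
  · rw [hdim']
    cases i using Fin.cases with
    | zero => simp [dims]
    | succ i => simp [dims]; rfl
  · rw [ncard_vecMul_eigenvectors_eq_sum M hinj hbot, ncard_vecMul_eigenvectors_eq_sum M' hmu hbot']
    simp only [hdim, hdim', dims, Fin.sum_univ_succ (n := k), Fin.cons_zero, Fin.cons_succ]
    exact key
end

section
/- Let M be a non-scalar (n+1)×(n+1) matrix over F_q whose total number of (left) eigenvectors equals q^n − 1. Then, after replacing M by M − λI for the eigenvalue λ whose eigenspace has largest dimension, the resulting matrix has rank 1 and trace 0. -/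
/-!
The left eigenvectors of `M` are the nonzero vectors of the eigenspaces of `Mᵀ`, so
`∑ (q ^ dᵢ - 1) = q ^ n - 1` over the eigenvalues with eigenspace dimensions `dᵢ ≥ 1`.
Reducing modulo `q` shows that there is exactly one such eigenvalue `λ`, with `dim = n`, so
`A = M - λI` has rank one. A rank-one endomorphism `x ↦ φ(x) w` has `w` as an eigenvector for
the eigenvalue `φ(w) = tr`, so `λ + tr A` is an eigenvalue of `Mᵀ`, which forces `tr A = 0`.
-/

open Matrix Module LinearMap Finset
open scoped Function

theorem LinearMap.exists_eq_smulRight_of_finrank_range_eq_one {K V W : Type*} [Field K]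
    [AddCommGroup V] [Module K V] [AddCommGroup W] [Module K W] {f : V →ₗ[K] W}
    (h : finrank K (range f) = 1) :
    ∃ (φ : V →ₗ[K] K) (w : W), w ≠ 0 ∧ f = φ.smulRight w := by
  let b := Module.basisUnique Unit h
  refine ⟨b.coord () ∘ₗ f.rangeRestrict, b (), fun h0 => b.ne_zero () (Subtype.ext h0), ?_⟩
  ext x
  simpa using congrArg Subtype.val (b.sum_repr (f.rangeRestrict x)).symm

theorem Module.End.hasEigenvalue_trace_of_finrank_range_eq_one {K V : Type*} [Field K]
    [AddCommGroup V] [Module K V] [FiniteDimensional K V] {f : End K V}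
    (h : finrank K (range f) = 1) : f.HasEigenvalue (trace K V f) := by
  obtain ⟨φ, w, hw, rfl⟩ := f.exists_eq_smulRight_of_finrank_range_eq_one h
  exact End.hasEigenvalue_of_hasEigenvector ⟨End.mem_eigenspace_iff.mpr (by simp), hw⟩

theorem Module.End.eigenspace_sub_smul_one {R M : Type*} [CommRing R] [AddCommGroup M]
    [Module R M] (f : End R M) (c μ : R) :
    (f - c • 1).eigenspace μ = f.eigenspace (μ + c) := by
  rw [End.eigenspace_def, End.eigenspace_def, sub_sub, add_smul, add_comm (μ • _)]

theorem Module.End.ncard_eigenvectors_s12 {K V : Type*} [Field K] [Fintype K] [AddCommGroup V]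
    [Module K V] [FiniteDimensional K V] (f : End K V) :
    {v : V | v ≠ 0 ∧ ∃ c : K, f v = c • v}.ncard =
      ∑ c, (Fintype.card K ^ finrank K (f.eigenspace c) - 1) := by
  have : Finite V := Module.finite_of_finite K
  have hunion :
      {v : V | v ≠ 0 ∧ ∃ c : K, f v = c • v} = ⋃ c, (f.eigenspace c : Set V) \ {0} := by
    ext v
    simp [and_comm]
  have hdisj : Pairwise (Disjoint on fun c => (f.eigenspace c : Set V) \ {0}) := by
    intro a b hab
    refine Set.disjoint_left.mpr fun v ⟨hva, hv0⟩ ⟨hvb, _⟩ => hv0 ?_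
    exact Submodule.disjoint_def.mp (f.disjoint_genEigenspace hab 1 1) v hva hvb
  rw [hunion, Set.ncard_iUnion_of_finite (fun _ => Set.toFinite _) hdisj,
    finsum_eq_sum_of_fintype]
  refine Finset.sum_congr rfl fun c _ => ?_
  rw [Set.ncard_sdiff_singleton_of_mem (zero_mem _), ← Nat.card_coe_set_eq, SetLike.coe_sort_coe,
    natCard_eq_pow_finrank (K := K), Nat.card_eq_fintype_card]

theorem exists_eq_and_eq_zero_of_sum_pow_sub_one {ι : Type*} [Fintype ι] {q n : ℕ}
    {d : ι → ℕ} (hq : 1 < q) (hι : Fintype.card ι ≤ q) (hn : n ≠ 0)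
    (h : ∑ i, (q ^ d i - 1) = q ^ n - 1) : ∃ l, d l = n ∧ ∀ i ≠ l, d i = 0 := by
  classical
  set s := univ.filter (d · ≠ 0)
  have hpos : ∀ i, 1 ≤ q ^ d i := fun i => Nat.one_le_pow _ _ (by omega)
  have hs : ∑ i ∈ s, (q ^ d i - 1) = q ^ n - 1 :=
    h ▸ sum_filter_of_ne fun i _ hi hdi => hi (by simp [hdi])
  have hqn : 1 < q ^ n := Nat.one_lt_pow hn hq
  have hsum : ∑ i ∈ s, q ^ d i = q ^ n - 1 + #s := by
    have hle := card_nsmul_le_sum s _ 1 fun i _ => hpos i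
    rw [sum_tsub_distrib s fun i _ => hpos i, sum_const, smul_eq_mul, mul_one] at hs
    rw [smul_eq_mul, mul_one] at hle
    omega
  have hs0 : #s ≠ 0 := by
    intro hs0
    rw [card_eq_zero.mp hs0, sum_empty] at hsum
    omega
  -- each `q ^ d i` with `i ∈ s` is divisible by `q`, so `#s ≡ 1 [MOD q]`, while `#s ≤ q`
  have hdvd : q ∣ #s - 1 := by
    refine (Nat.dvd_add_right (dvd_pow_self q hn)).mp ?_
    rw [show q ^ n + (#s - 1) = ∑ i ∈ s, q ^ d i by omega]
    exact dvd_sum fun i hi => dvd_pow_self q (mem_filter.mp hi).2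
  have hcard : #s = 1 := by
    have := Nat.eq_zero_of_dvd_of_lt hdvd (by have := card_le_univ s; omega)
    omega
  obtain ⟨l, hl⟩ := card_eq_one.mp hcard
  refine ⟨l, ?_, fun i hi => ?_⟩
  · rw [hl, sum_singleton] at hs
    exact Nat.pow_right_injective hq (show q ^ d l = q ^ n by have := hpos l; omega)
  · by_contra hdi
    exact hi (mem_singleton.mp (hl ▸ mem_filter.mpr ⟨mem_univ i, hdi⟩))

/-- If a non-scalar matrix `M` over `F_q` has exactly `q^n - 1` left eigenvectors, then
`M - λI` has rank `1` and trace `0`, where `λ` is the eigenvalue whose eigenspace has the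
largest dimension. -/
theorem rank_one_trace_zero_of_second_lowest {n : ℕ} {F : Type*} [Field F] [Fintype F]
    (M : Matrix (Fin (n + 1)) (Fin (n + 1)) F)
    (hM : ∀ c : F, M ≠ c • (1 : Matrix (Fin (n + 1)) (Fin (n + 1)) F))
    (hnum : Set.ncard {ξ : Fin (n + 1) → F | ξ ≠ 0 ∧ ∃ c : F, Matrix.vecMul ξ M = c • ξ}
      = (Fintype.card F) ^ n - 1) :
    ∃ l : F,
      (∀ mu : F, Module.finrank F (Module.End.eigenspace (Matrix.mulVecLin Mᵀ) mu)
        ≤ Module.finrank F (Module.End.eigenspace (Matrix.mulVecLin Mᵀ) l)) ∧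
      (M - l • (1 : Matrix (Fin (n + 1)) (Fin (n + 1)) F)).rank = 1 ∧
      Matrix.trace (M - l • (1 : Matrix (Fin (n + 1)) (Fin (n + 1)) F)) = 0 := by
  set T : End F (Fin (n + 1) → F) := mulVecLin Mᵀ
  have hn : n ≠ 0 := by
    rintro rfl
    exact hM (M 0 0) (by ext i j; fin_cases i; fin_cases j; simp)
  have hcount :
      ∑ c, (Fintype.card F ^ finrank F (T.eigenspace c) - 1) = Fintype.card F ^ n - 1 := by
    rw [← T.ncard_eigenvectors_s12, ← hnum]
    simp [T]
  obtain ⟨l, hl, hzero⟩ :=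
    exists_eq_and_eq_zero_of_sum_pow_sub_one Fintype.one_lt_card le_rfl hn hcount
  set g := T - l • 1
  have hg : (M - l • 1)ᵀ.mulVecLin = g := by
    ext; simp [g, T]
  have hker : finrank F (ker g) = n := by
    rw [← End.eigenspace_zero, End.eigenspace_sub_smul_one, zero_add, hl]
  have hrank : finrank F (range g) = 1 := by
    have := g.finrank_range_add_finrank_ker
    simp only [hker, finrank_fin_fun] at this
    omega
  refine ⟨l, fun μ => ?_, ?_, ?_⟩
  · rcases eq_or_ne μ l with rfl | hμ
    · rfl
    · simp [hzero μ hμ]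
  · rw [← rank_transpose, Matrix.rank, hg, hrank]
  · have htrace := End.hasEigenvalue_trace_of_finrank_range_eq_one hrank
    have htr : trace F _ g = (M - l • 1).trace := by
      rw [← hg, ← Matrix.toLin'_apply', Matrix.trace_toLin'_eq, Matrix.trace_transpose]
    rw [htr, End.hasEigenvalue_iff, End.eigenspace_sub_smul_one] at htrace
    by_contra ht
    exact htrace (Submodule.finrank_eq_zero.mp (hzero _ (by simpa using ht)))
end

section
/- Let q ≥ 2 and n ≥ 1. The map sending a non-decreasing tuple (g₁,…,g_t) with 1 ≤ t ≤ q and Σgᵢ ≤ n+1 to the value Σᵢ(q^{gᵢ}−1)/(q−1), extended by sending 0 to 0, is injective. -/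
/-!
Write `q ^ g - 1 = (q - 1) · (1 + q + ⋯ + q^(g-1))`, so dividing by `q - 1` is injective on the
sums in question and it suffices to recover a multiset of exponents from `Σᵢ (q ^ gᵢ - 1)`.
This is a base-`q` digit argument: at most `q` terms with exponents `≤ a` sum to at most
`q (q^a - 1) < q^(a+1) - 1`, so the largest exponent is determined by the sum; cancel it and
induct.
-/

namespace Nat

theorem sum_map_pow_sub_one_pos {q : ℕ} (hq : 2 ≤ q) {l : List ℕ} (hl : l ≠ [])
    (hpos : ∀ x ∈ l, 1 ≤ x) : 0 < (l.map (q ^ · - 1)).sum := by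
  obtain ⟨a, t, rfl⟩ := List.exists_cons_of_ne_nil hl
  have : q ≤ q ^ a := Nat.le_self_pow (Nat.one_le_iff_ne_zero.mp (hpos a (by simp))) q
  simp only [List.map_cons, List.sum_cons]
  omega

theorem sum_map_pow_sub_one_lt {q a : ℕ} (hq : 2 ≤ q) {l : List ℕ} (hlen : l.length ≤ q)
    (hle : ∀ x ∈ l, x ≤ a) : (l.map (q ^ · - 1)).sum < q ^ (a + 1) - 1 := by
  have hterm : ∀ y ∈ l.map (q ^ · - 1), y ≤ q ^ a - 1 := by
    simp only [List.mem_map, forall_exists_index, and_imp, forall_apply_eq_imp_iff₂]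
    exact fun x hx => Nat.sub_le_sub_right (Nat.pow_le_pow_right (by omega) (hle x hx)) 1
  have hpow : 1 ≤ q ^ a := Nat.one_le_pow _ _ (by omega)
  calc (l.map (q ^ · - 1)).sum ≤ l.length * (q ^ a - 1) := by
        simpa using List.sum_le_card_nsmul _ _ hterm
    _ ≤ q * (q ^ a - 1) := Nat.mul_le_mul_right _ hlen
    _ < q ^ (a + 1) - 1 := by
        have : q ≤ q * q ^ a := Nat.le_mul_of_pos_right q hpow
        rw [Nat.mul_sub_one, pow_succ']
        omega

theorem le_of_sum_map_pow_sub_one_le {q a b : ℕ} (hq : 2 ≤ q) {l l' : List ℕ}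
    (hl : (a :: l).Pairwise (· ≥ ·)) (hlen : (a :: l).length ≤ q)
    (hsum : ((b :: l').map (q ^ · - 1)).sum ≤ ((a :: l).map (q ^ · - 1)).sum) : b ≤ a := by
  by_contra! hab
  have hle : ∀ x ∈ a :: l, x ≤ a := by
    simpa using (List.pairwise_cons.mp hl).1
  have hlt := sum_map_pow_sub_one_lt hq hlen hle
  have : q ^ (a + 1) ≤ q ^ b := Nat.pow_le_pow_right (by omega) hab
  simp only [List.map_cons, List.sum_cons] at hsum hlt
  omega

theorem eq_of_sum_map_pow_sub_one_eq {q : ℕ} (hq : 2 ≤ q) {l l' : List ℕ}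
    (hl : l.Pairwise (· ≥ ·)) (hl' : l'.Pairwise (· ≥ ·))
    (hpos : ∀ x ∈ l, 1 ≤ x) (hpos' : ∀ x ∈ l', 1 ≤ x)
    (hlen : l.length ≤ q) (hlen' : l'.length ≤ q)
    (hsum : (l.map (q ^ · - 1)).sum = (l'.map (q ^ · - 1)).sum) : l = l' := by
  induction l generalizing l' with
  | nil =>
    by_contra hne
    have := sum_map_pow_sub_one_pos hq (Ne.symm hne) hpos'
    simp_all
  | cons a t ih =>
    cases l' with
    | nil =>
      have := sum_map_pow_sub_one_pos hq (List.cons_ne_nil a t) hpos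
      simp_all
    | cons b t' =>
      obtain rfl : b = a := le_antisymm (le_of_sum_map_pow_sub_one_le hq hl hlen hsum.ge)
        (le_of_sum_map_pow_sub_one_le hq hl' hlen' hsum.le)
      simp only [List.map_cons, List.sum_cons, Nat.add_left_cancel_iff] at hsum
      rw [ih (List.pairwise_cons.mp hl).2 (List.pairwise_cons.mp hl').2
        (fun x hx => hpos x (.tail _ hx)) (fun x hx => hpos' x (.tail _ hx))
        (Nat.le_of_succ_le hlen) (Nat.le_of_succ_le hlen') hsum]

theorem sum_map_pow_sub_one_reverse_ofFn (q : ℕ) {t : ℕ} (g : Fin t → ℕ) :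
    ((List.ofFn g).reverse.map (q ^ · - 1)).sum = ∑ i, (q ^ g i - 1) := by
  rw [List.map_reverse, List.sum_reverse, List.map_ofFn, List.sum_ofFn]
  rfl

theorem sum_pow_sub_one_pos {q t : ℕ} (hq : 2 ≤ q) (ht : 1 ≤ t) {g : Fin t → ℕ}
    (hpos : ∀ i, 1 ≤ g i) : 0 < ∑ i, (q ^ g i - 1) := by
  rw [← sum_map_pow_sub_one_reverse_ofFn]
  refine sum_map_pow_sub_one_pos hq (by simp only [ne_eq, List.reverse_eq_nil_iff, List.ofFn_eq_nil_iff]; omega) ?_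
  simpa using hpos

theorem tuple_eq_of_sum_pow_sub_one_eq {q t t' : ℕ} (hq : 2 ≤ q) (ht : t ≤ q) (ht' : t' ≤ q)
    {g : Fin t → ℕ} {g' : Fin t' → ℕ} (hg : Monotone g) (hg' : Monotone g')
    (hpos : ∀ i, 1 ≤ g i) (hpos' : ∀ i, 1 ≤ g' i)
    (hsum : ∑ i, (q ^ g i - 1) = ∑ i, (q ^ g' i - 1)) :
    ∃ h : t = t', ∀ i, g i = g' (Fin.cast h i) := by
  have hlists : (List.ofFn g).reverse = (List.ofFn g').reverse :=
    eq_of_sum_map_pow_sub_one_eq hq hg.sortedLE_ofFn.reverse.pairwise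
      hg'.sortedLE_ofFn.reverse.pairwise (by simpa using hpos) (by simpa using hpos')
      (by simpa using ht) (by simpa using ht')
      (by simpa only [sum_map_pow_sub_one_reverse_ofFn] using hsum)
  obtain ⟨rfl, hgg'⟩ := Sigma.mk.inj_iff.mp (List.ofFn_inj'.mp (List.reverse_injective hlists))
  exact ⟨rfl, fun i => by rw [eq_of_heq hgg', Fin.cast_eq_self]⟩

end Nat

theorem weight_spectrum_injective_general (q n : ℕ) (hq : 2 ≤ q) :
    (∀ (t : ℕ) (g : Fin t → ℕ), 1 ≤ t → t ≤ q → Monotone g →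
      (∀ i, 1 ≤ g i ∧ g i ≤ n + 1) → (∑ i, g i ≤ n + 1) →
      0 < (∑ i, (q ^ g i - 1)) / (q - 1)) ∧
    (∀ (t t' : ℕ) (g : Fin t → ℕ) (g' : Fin t' → ℕ),
      1 ≤ t → t ≤ q → 1 ≤ t' → t' ≤ q →
      Monotone g → Monotone g' →
      (∀ i, 1 ≤ g i ∧ g i ≤ n + 1) → (∀ i, 1 ≤ g' i ∧ g' i ≤ n + 1) →
      (∑ i, g i ≤ n + 1) → (∑ i, g' i ≤ n + 1) →
      (∑ i, (q ^ g i - 1)) / (q - 1) = (∑ i, (q ^ g' i - 1)) / (q - 1) →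
      ∃ h : t = t', ∀ i : Fin t, g i = g' (Fin.cast h i)) := by
  have hdvd {t : ℕ} (g : Fin t → ℕ) : q - 1 ∣ ∑ i, (q ^ g i - 1) :=
    Finset.dvd_sum fun i _ => Nat.sub_one_dvd_pow_sub_one q (g i)
  refine ⟨fun t g ht _ _ hg _ => ?_, fun t t' g g' _ ht _ ht' hm hm' hg hg' _ _ heq => ?_⟩
  · have hpos := Nat.sum_pow_sub_one_pos hq ht fun i => (hg i).1
    exact Nat.div_pos (Nat.le_of_dvd hpos (hdvd g)) (by omega)
  · rw [Nat.div_left_inj (hdvd g) (hdvd g')] at heq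
    exact Nat.tuple_eq_of_sum_pow_sub_one_eq hq ht ht' hm hm' (fun i => (hg i).1)
      (fun i => (hg' i).1) heq

/-- The map sending a nondecreasing tuple `(g₁,…,g_t)` with `1 ≤ t ≤ q`, `1 ≤ gᵢ ≤ n+1`,
`Σ gᵢ ≤ n+1` to `Σᵢ (q^{gᵢ} - 1)/(q - 1)`, extended by `0 ↦ 0`, is injective: tuples take
nonzero values, and two tuples with the same value coincide. -/
theorem weight_spectrum_injective (q n : ℕ) (hq : 2 ≤ q) (hn : 1 ≤ n) :
    (∀ (t : ℕ) (g : Fin t → ℕ), 1 ≤ t → t ≤ q → Monotone g →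
      (∀ i, 1 ≤ g i ∧ g i ≤ n + 1) → (∑ i, g i ≤ n + 1) →
      0 < (∑ i, (q ^ g i - 1)) / (q - 1)) ∧
    (∀ (t t' : ℕ) (g : Fin t → ℕ) (g' : Fin t' → ℕ),
      1 ≤ t → t ≤ q → 1 ≤ t' → t' ≤ q →
      Monotone g → Monotone g' →
      (∀ i, 1 ≤ g i ∧ g i ≤ n + 1) → (∀ i, 1 ≤ g' i ∧ g' i ≤ n + 1) →
      (∑ i, g i ≤ n + 1) → (∑ i, g' i ≤ n + 1) →
      (∑ i, (q ^ g i - 1)) / (q - 1) = (∑ i, (q ^ g' i - 1)) / (q - 1) →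
      ∃ h : t = t', ∀ i : Fin t, g i = g' (Fin.cast h i)) :=
  weight_spectrum_injective_general q n hq
end
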